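/- arXiv:2312.15096 — 3 statements merged into one kernel-verified Lean document; each statement's English description precedes it below -/
import Mathlib

section
/- There is a universal constant c > 0 such that for every w ≥ 1 the connected nonnegative configuration C = {(i,0,0) : 0 ≤ i ≤ w} ∪ {(w,j,0) : 0 ≤ j ≤ w} ∪ {(w,w,k) : 0 ≤ k ≤ w} of n = 3w+1 cubes has the property that every sequence of moves transforming C into a finished configuration of n cubes has length at least c·n². (Hence the O(X_C + Y_C + Z_C) bound on the number of moves for compaction is asymptotically worst-case optimal.) -/
/-- A cube is a point of `ℤ³`. -/
abbrev Cube : Type := ℤ × ℤ × ℤ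

/-- Two cubes are adjacent if they lie at `L1`-distance `1`. -/
def cubeAdj (a b : Cube) : Prop :=
  (a.1 - b.1).natAbs + (a.2.1 - b.2.1).natAbs + (a.2.2 - b.2.2).natAbs = 1

lemma cubeAdj_symm {a b : Cube} (h : cubeAdj a b) : cubeAdj b a := by
  unfold cubeAdj at h ⊢
  omega

lemma cubeAdj_irrefl (a : Cube) : ¬ cubeAdj a a := by
  unfold cubeAdj; simp

/-- The graph `G_S` on a set of cubes `S`, connecting adjacent cubes of `S`. -/
def gph (S : Finset Cube) : SimpleGraph Cube where
  Adj a b := a ∈ S ∧ b ∈ S ∧ cubeAdj a b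
  symm := by
    constructor
    rintro a b ⟨ha, hb, h⟩
    exact ⟨hb, ha, cubeAdj_symm h⟩
  loopless := by
    constructor
    rintro a ⟨-, -, h⟩
    exact cubeAdj_irrefl a h

/-- A set of cubes is connected if it is nonempty and all its cubes are joined by
paths of adjacent cubes inside the set. -/
def Conn (S : Finset Cube) : Prop :=
  S.Nonempty ∧ ∀ a ∈ S, ∀ b ∈ S, (gph S).Reachable a b

/-- Connected or empty. -/
def ConnOrEmpty (S : Finset Cube) : Prop := S = ∅ ∨ Conn S

/-- A configuration is nonnegative if all coordinates of all its cubes are `≥ 0`. -/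
def Nonneg (C : Finset Cube) : Prop := ∀ c ∈ C, 0 ≤ c.1 ∧ 0 ≤ c.2.1 ∧ 0 ≤ c.2.2

/-- `Sq4 p q r s` : the four points form a 4-cycle `p-q-r-s-p` in the unit-distance
graph on `ℤ³`. -/
def Sq4 (p q r s : Cube) : Prop :=
  cubeAdj p q ∧ cubeAdj q r ∧ cubeAdj r s ∧ cubeAdj s p ∧ p ≠ r ∧ q ≠ s

/-- Slide: there is a 4-cycle `c, c', r, s` with exactly the three vertices
other than `c'` in `C` (and `c` adjacent to `c'`). -/
def IsSlide (C : Finset Cube) (c c' : Cube) : Prop :=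
  c ∈ C ∧ c' ∉ C ∧ ∃ r s, Sq4 c c' r s ∧ r ∈ C ∧ s ∈ C

/-- Convex transition: there is a 4-cycle `c, q, c', s` with exactly two
(adjacent) vertices in `C`, one of them `c`, and `c'` opposite to `c`. -/
def IsConvexTrans (C : Finset Cube) (c c' : Cube) : Prop :=
  c ∈ C ∧ c' ∉ C ∧ ∃ q s, Sq4 c q c' s ∧ ((q ∈ C ∧ s ∉ C) ∨ (s ∈ C ∧ q ∉ C))

/-- A move replaces `c ∈ C` by `c' ∉ C` via a slide or a convex transition,
such that `C \ {c}` is connected. -/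
def IsMoveVia (C : Finset Cube) (c c' : Cube) : Prop :=
  (IsSlide C c c' ∨ IsConvexTrans C c c') ∧ Conn (C.erase c)

/-- `C'` is obtained from `C` by a single move. -/
def MoveStep (C C' : Finset Cube) : Prop :=
  ∃ c c', IsMoveVia C c c' ∧ C' = insert c' (C.erase c)

/-- `MoveSeq C m C'` : a sequence of `m` moves from `C` to `C'`, each resulting in a
connected configuration. -/
def MoveSeq (C : Finset Cube) (m : ℕ) (C' : Finset Cube) : Prop :=
  ∃ f : ℕ → Finset Cube, f 0 = C ∧ f m = C' ∧
    ∀ i < m, MoveStep (f i) (f (i + 1)) ∧ Conn (f (i + 1))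

/-- Sum of `x`-coordinates of `C`. -/
def Xsum (C : Finset Cube) : ℤ := ∑ c ∈ C, c.1

/-- Sum of `y`-coordinates of `C`. -/
def Ysum (C : Finset Cube) : ℤ := ∑ c ∈ C, c.2.1

/-- Sum of `z`-coordinates of `C`. -/
def Zsum (C : Finset Cube) : ℤ := ∑ c ∈ C, c.2.2

/-- A cube `c` is finished in `C` if the whole box spanned by the origin and `c`
is contained in `C`. -/
def FinishedCube (C : Finset Cube) (c : Cube) : Prop :=
  ∀ p : Cube, 0 ≤ p.1 → p.1 ≤ c.1 → 0 ≤ p.2.1 → p.2.1 ≤ c.2.1 →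
    0 ≤ p.2.2 → p.2.2 ≤ c.2.2 → p ∈ C

/-- A finished configuration: nonnegative and all cubes finished. -/
def FinishedConfig (C : Finset Cube) : Prop :=
  Nonneg C ∧ ∀ c ∈ C, FinishedCube C c

/-- The weight of a cube. -/
def weight (c : Cube) : ℤ :=
  if 1 < c.2.2 then 5
  else if c.2.2 = 1 then 4
  else if 1 < c.2.1 then 3
  else if c.2.1 = 1 then 2
  else 1

/-- The potential of a cube `(x, y, z)` is `w • (x + 2y + 4z)`. -/
def pot (c : Cube) : ℤ := weight c * (c.1 + 2 * c.2.1 + 4 * c.2.2)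

/-- The potential of a configuration. -/
def Pot (C : Finset Cube) : ℤ := ∑ c ∈ C, pot c

/-- `SafeSeq C K` : `C` admits a sequence of `m ≥ 1` moves, each resulting in a connected
configuration, ending in a nonnegative configuration `C'` of strictly smaller potential,
with `m ≤ K • (Π_C - Π_{C'})`. -/
def SafeSeq (C : Finset Cube) (K : ℕ) : Prop :=
  ∃ (m : ℕ) (C' : Finset Cube), 1 ≤ m ∧ MoveSeq C m C' ∧ Nonneg C' ∧
    Pot C' < Pot C ∧ (m : ℤ) ≤ (K : ℤ) * (Pot C - Pot C')

/-- The set of cubes `{x} × {y} × {z_b, …, z_t}`. -/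
noncomputable def pillarSet (x y zb zt : ℤ) : Finset Cube :=
  (Finset.Icc zb zt).image fun z => (x, y, z)

/-- `P(x,y,z_b,z_t)` is a subpillar of `S`. -/
def IsSubpillar (S : Finset Cube) (x y zb zt : ℤ) : Prop :=
  zb ≤ zt ∧ pillarSet x y zb zt ⊆ S

/-- A pillar of `S`: a maximal subpillar. -/
def IsPillar (S : Finset Cube) (x y zb zt : ℤ) : Prop :=
  IsSubpillar S x y zb zt ∧ (x, y, zb - 1) ∉ S ∧ (x, y, zt + 1) ∉ S

/-- `(x', y')` is one of the four sides of the column `(x, y)`. -/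
def IsSide (x y x' y' : ℤ) : Prop :=
  (x' = x - 1 ∧ y' = y) ∨ (x' = x + 1 ∧ y' = y) ∨
  (x' = x ∧ y' = y - 1) ∨ (x' = x ∧ y' = y + 1)

/-- `P'(x',y',z'_b,z'_t)` is a pillar of `C` lying on a side of `P(x,y,z_b,z_t)`
and adjacent to it. -/
def AdjPillar (C : Finset Cube) (x y zb zt x' y' z'b z't : ℤ) : Prop :=
  IsPillar C x' y' z'b z't ∧ IsSide x y x' y' ∧ z'b ≤ zt ∧ zb ≤ z't

/-- A cut cube of `C`: a cube whose removal disconnects `C`. -/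
def IsCutCube (C : Finset Cube) (c : Cube) : Prop :=
  c ∈ C ∧ ¬ Conn (C.erase c)

/-- Condition (a): on some side the topmost adjacent pillar
`P'` satisfies `z'_t ≤ z_t - 2`. -/
def CondA (C : Finset Cube) (x y zb zt : ℤ) : Prop :=
  ∃ x' y' z'b z't, AdjPillar C x y zb zt x' y' z'b z't ∧
    (∀ z''b z''t, AdjPillar C x y zb zt x' y' z''b z''t → z''t ≤ z't) ∧
    z't ≤ zt - 2

/-- Condition (b): some adjacent pillar `P'` has `z'_b > z_b` and
`(x, y, z'_b - 1)` is not a cut cube of `C`. -/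
def CondB (C : Finset Cube) (x y zb zt : ℤ) : Prop :=
  ∃ x' y' z'b z't, AdjPillar C x y zb zt x' y' z'b z't ∧ zb < z'b ∧
    ¬ IsCutCube C (x, y, z'b - 1)

/-- Condition (c): `(x, y, z_b - 1) ∉ C` and some adjacent pillar has `z'_b < z_b`. -/
def CondC (C : Finset Cube) (x y zb zt : ℤ) : Prop :=
  (x, y, zb - 1) ∉ C ∧
  ∃ x' y' z'b z't, AdjPillar C x y zb zt x' y' z'b z't ∧ z'b < zb

/-- Condition (d): `(x, y, z_b - 1) ∉ C` and on some side the bottommost adjacent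
pillar `P'` satisfies `z'_b = z_b > 0`. -/
def CondD (C : Finset Cube) (x y zb zt : ℤ) : Prop :=
  (x, y, zb - 1) ∉ C ∧
  ∃ x' y' z'b z't, AdjPillar C x y zb zt x' y' z'b z't ∧
    (∀ z''b z''t, AdjPillar C x y zb zt x' y' z''b z''t → z'b ≤ z''b) ∧
    z'b = zb ∧ 0 < zb

/-- Condition (e): at most one adjacent pillar on each side; there is an adjacent
pillar `P'` with `z'_b > z_b`, minimal such; and some other side `(x'', y'')` has
`(x'', y'', z_b) ∉ C`. -/
def CondE (C : Finset Cube) (x y zb zt : ℤ) : Prop :=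
  (∀ x' y' z'b z't z''b z''t, AdjPillar C x y zb zt x' y' z'b z't →
      AdjPillar C x y zb zt x' y' z''b z''t → z'b = z''b ∧ z't = z''t) ∧
  ∃ x' y' z'b z't, AdjPillar C x y zb zt x' y' z'b z't ∧ zb < z'b ∧
    (∀ x'' y'' z''b z''t, AdjPillar C x y zb zt x'' y'' z''b z''t →
      zb < z''b → z'b ≤ z''b) ∧
    ∃ x'' y'', IsSide x y x'' y'' ∧ (x'', y'') ≠ (x', y') ∧ (x'', y'', zb) ∉ C

/-- No non-cut subpillar of `C` satisfies any of the conditions (a)--(e). -/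
def NoCondAE (C : Finset Cube) : Prop :=
  ∀ x y zb zt, IsSubpillar C x y zb zt →
    ConnOrEmpty (C \ pillarSet x y zb zt) →
    ¬ (CondA C x y zb zt ∨ CondB C x y zb zt ∨ CondC C x y zb zt ∨
       CondD C x y zb zt ∨ CondE C x y zb zt)

/-- Two sets of cubes are adjacent if some cube of one is adjacent to a cube of the other. -/
def AdjSets (S T : Finset Cube) : Prop := ∃ a ∈ S, ∃ b ∈ T, cubeAdj a b

/-- The cubes of `C` with `z > 0`. -/
def Cpos (C : Finset Cube) : Finset Cube := C.filter fun c => 0 < c.2.2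

/-- The cubes of `C` with `z = 0`. -/
def Czero (C : Finset Cube) : Finset Cube := C.filter fun c => c.2.2 = 0

/-- `H` is a connected component of `G_S`: nonempty, connected and closed under
adjacency within `S`. -/
def IsCompOf (S H : Finset Cube) : Prop :=
  H ⊆ S ∧ Conn H ∧ ∀ a ∈ H, ∀ b ∈ S, cubeAdj a b → b ∈ H

/-- A high component of `C`: a connected component of `G_{C_{>0}}`. -/
def IsHighComp (C H : Finset Cube) : Prop := IsCompOf (Cpos C) H

/-- A low component of `C`: a connected component of `G_{C_0}`. -/
def IsLowComp (C L : Finset Cube) : Prop := IsCompOf (Czero C) L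

/-- A move of type (f): it moves a cube with `z > 0`, strictly decreases the
potential, and results in a nonnegative configuration. -/
def MoveTypeF (C : Finset Cube) : Prop :=
  ∃ c c', IsMoveVia C c c' ∧ 0 < c.2.2 ∧
    Nonneg (insert c' (C.erase c)) ∧ Pot (insert c' (C.erase c)) < Pot C

/-- `R` is the root: the low component containing the origin if `(0,0,0) ∈ C`,
an arbitrary low component otherwise. -/
def IsRoot (C R : Finset Cube) : Prop :=
  IsLowComp C R ∧ (((0 : ℤ), (0 : ℤ), (0 : ℤ)) ∈ C → ((0 : ℤ), (0 : ℤ), (0 : ℤ)) ∈ R)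

/-- A clear low component `L` (w.r.t. root `R`): `C \ L` is connected, `L ≠ R`, and
some pillar of `C \ L` adjacent to `L` is non-cut in `C \ L`. -/
def IsClear (C R L : Finset Cube) : Prop :=
  IsLowComp C L ∧ Conn (C \ L) ∧ L ≠ R ∧
  ∃ x y zb zt, IsPillar (C \ L) x y zb zt ∧ AdjSets (pillarSet x y zb zt) L ∧
    ConnOrEmpty ((C \ L) \ pillarSet x y zb zt)

/-- `P(x,y,z_b,z_t)` is a clearing pillar of the clear low component `L`. -/
def IsClearingPillar (C R L : Finset Cube) (x y zb zt : ℤ) : Prop :=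
  IsClear C R L ∧ IsPillar (C \ L) x y zb zt ∧ AdjSets (pillarSet x y zb zt) L ∧
    ConnOrEmpty ((C \ L) \ pillarSet x y zb zt)

/-- A move of type (g): it moves a cube of some clear low component, strictly
decreases the potential, and results in a nonnegative configuration. -/
def MoveTypeG (C R : Finset Cube) : Prop :=
  ∃ L, IsClear C R L ∧ ∃ c c', IsMoveVia C c c' ∧ c ∈ L ∧
    Nonneg (insert c' (C.erase c)) ∧ Pot (insert c' (C.erase c)) < Pot C

/-- The low-high graph `LH_C`: its vertices are the low and high components of `C`,
with edges between adjacent low and high components. -/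
def LH (C : Finset Cube) : SimpleGraph (Finset Cube) where
  Adj S T := S ≠ T ∧ AdjSets S T ∧
    ((IsLowComp C S ∧ IsHighComp C T) ∨ (IsHighComp C S ∧ IsLowComp C T))
  symm := by
    constructor
    rintro S T ⟨hne, ⟨a, ha, b, hb, hab⟩, h⟩
    exact ⟨hne.symm, ⟨b, hb, a, ha, cubeAdj_symm hab⟩, h.symm.imp And.symm And.symm⟩
  loopless := ⟨fun S h => h.1 rfl⟩

/-- `c` lies in the bounding box of `C`. -/
def InBBox (C : Finset Cube) (c : Cube) : Prop :=
  (∃ a ∈ C, a.1 ≤ c.1) ∧ (∃ a ∈ C, c.1 ≤ a.1) ∧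
  (∃ a ∈ C, a.2.1 ≤ c.2.1) ∧ (∃ a ∈ C, c.2.1 ≤ a.2.1) ∧
  (∃ a ∈ C, a.2.2 ≤ c.2.2) ∧ (∃ a ∈ C, c.2.2 ≤ a.2.2)

/-- The staircase path configuration with `n = 3w + 1` cubes. -/
noncomputable def pathConfig (w : ℕ) : Finset Cube :=
  ((Finset.Icc 0 (w : ℤ)).image fun i => (i, (0 : ℤ), (0 : ℤ))) ∪
  ((Finset.Icc 0 (w : ℤ)).image fun j => ((w : ℤ), j, (0 : ℤ))) ∪
  ((Finset.Icc 0 (w : ℤ)).image fun k => ((w : ℤ), (w : ℤ), k))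

/-! ### Auxiliary material for the lower bound -/

/-- The minimum coordinate of a cube. -/
def phiMin (c : Cube) : ℤ := min c.1 (min c.2.1 c.2.2)

/-- Sum of minimum coordinates over a configuration. -/
def PhiSum (C : Finset Cube) : ℤ := ∑ c ∈ C, phiMin c

lemma phiMin_lipschitz {c c' : Cube}
    (h : (c.1 - c'.1).natAbs + (c.2.1 - c'.2.1).natAbs + (c.2.2 - c'.2.2).natAbs ≤ 2) :
    phiMin c ≤ phiMin c' + 2 := by
  unfold phiMin
  simp only [min_def]; split_ifs <;> omega

lemma move_dist {C : Finset Cube} {c c' : Cube} (h : IsMoveVia C c c') :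
    (c.1 - c'.1).natAbs + (c.2.1 - c'.2.1).natAbs + (c.2.2 - c'.2.2).natAbs ≤ 2 := by
  rcases h.1 with hs | hc
  · obtain ⟨-, -, r, s, ⟨hadj, -⟩, -, -⟩ := hs
    unfold cubeAdj at hadj; omega
  · obtain ⟨-, -, q, s, ⟨h1, h2, -⟩, -⟩ := hc
    unfold cubeAdj at h1 h2; omega

lemma move_mem {C : Finset Cube} {c c' : Cube} (h : IsMoveVia C c c') :
    c ∈ C ∧ c' ∉ C := by
  rcases h.1 with hs | hc
  · exact ⟨hs.1, hs.2.1⟩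
  · exact ⟨hc.1, hc.2.1⟩

lemma phiSum_step {C₁ C₂ : Finset Cube} (h : MoveStep C₁ C₂) :
    PhiSum C₁ ≤ PhiSum C₂ + 2 := by
  obtain ⟨c, c', hmv, rfl⟩ := h
  obtain ⟨hcC, hc'C⟩ := move_mem hmv
  have hc'ne : c' ∉ C₁.erase c := fun hx => hc'C (Finset.mem_of_mem_erase hx)
  have h1 : PhiSum (insert c' (C₁.erase c)) = phiMin c' + (PhiSum C₁ - phiMin c) := by
    unfold PhiSum
    rw [Finset.sum_insert hc'ne, Finset.sum_erase_eq_sub hcC]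
  have h2 : phiMin c ≤ phiMin c' + 2 := phiMin_lipschitz (move_dist hmv)
  omega

lemma phiSum_moveSeq {C : Finset Cube} {m : ℕ} {C' : Finset Cube}
    (h : MoveSeq C m C') : PhiSum C ≤ PhiSum C' + 2 * m := by
  obtain ⟨f, hf0, hfm, hstep⟩ := h
  have key : ∀ i ≤ m, PhiSum (f 0) ≤ PhiSum (f i) + 2 * i := by
    intro i hi
    induction i with
    | zero => simp
    | succ k ih =>
      have hk := ih (Nat.le_of_succ_le hi)
      have := phiSum_step (hstep k (Nat.lt_of_succ_le hi)).1
      push_cast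
      push_cast at hk
      linarith
  have := key m le_rfl
  rw [hf0, hfm] at this
  exact this

lemma gauss_sum (w : ℕ) : 2 * ∑ k ∈ Finset.Icc (0:ℤ) (w:ℤ), k = w * (w + 1) := by
  induction w with
  | zero => simp
  | succ n ih =>
    have h1 : ((n:ℤ)+1) ∉ Finset.Icc (0:ℤ) (n:ℤ) := by simp
    have h2 : Finset.Icc (0:ℤ) ((n+1:ℕ):ℤ) = insert ((n:ℤ)+1) (Finset.Icc (0:ℤ) (n:ℤ)) := by
      ext x; push_cast; simp; omega
    rw [h2, Finset.sum_insert h1]; push_cast; linarith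

lemma phiSum_path (w : ℕ) : (w:ℤ) * (w + 1) ≤ 2 * PhiSum (pathConfig w) := by
  set arm3 : Finset Cube := (Finset.Icc 0 (w : ℤ)).image fun k => ((w : ℤ), (w : ℤ), k) with harm
  have hsub : arm3 ⊆ pathConfig w := by
    intro x hx
    unfold pathConfig
    exact Finset.mem_union_right _ hx
  have hnn : ∀ x ∈ pathConfig w, 0 ≤ phiMin x := by
    intro x hx
    unfold pathConfig at hx
    simp only [Finset.mem_union, Finset.mem_image, Finset.mem_Icc] at hx
    rcases hx with (⟨i, hi, rfl⟩ | ⟨j, hj, rfl⟩) | ⟨k, hk, rfl⟩ <;>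
      · unfold phiMin
        simp only [min_def]
        split_ifs <;> omega
  have h1 : ∑ x ∈ arm3, phiMin x ≤ PhiSum (pathConfig w) := by
    unfold PhiSum
    exact Finset.sum_le_sum_of_subset_of_nonneg hsub (fun i hi _ => hnn i hi)
  have h2 : ∑ x ∈ arm3, phiMin x = ∑ k ∈ Finset.Icc (0:ℤ) (w:ℤ), k := by
    rw [harm, Finset.sum_image (by intro a _ b _ hab; simpa using hab)]
    refine Finset.sum_congr rfl fun k hk => ?_
    simp only [Finset.mem_Icc] at hk
    unfold phiMin
    simp only [min_def]; split_ifs <;> omega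
  have := gauss_sum w
  omega

lemma phiMin_cube_bound {C : Finset Cube} (hfin : FinishedConfig C) {c : Cube} (hc : c ∈ C) :
    0 ≤ phiMin c ∧ (phiMin c + 1)^3 ≤ (C.card : ℤ) := by
  obtain ⟨hnn, hall⟩ := hfin
  obtain ⟨hx, hy, hz⟩ := hnn c hc
  set t := phiMin c with ht
  have ht0 : 0 ≤ t := by
    rw [ht]; unfold phiMin; simp only [le_min_iff]; exact ⟨hx, hy, hz⟩
  have htx : t ≤ c.1 := min_le_left _ _
  have hty : t ≤ c.2.1 := le_trans (min_le_right _ _) (min_le_left _ _)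
  have htz : t ≤ c.2.2 := le_trans (min_le_right _ _) (min_le_right _ _)
  refine ⟨ht0, ?_⟩
  have hbox : Finset.Icc ((0:ℤ),(0:ℤ),(0:ℤ)) (t,t,t) ⊆ C := by
    intro p hp
    have hp' : (0:ℤ) ≤ p.1 ∧ p.1 ≤ t ∧ (0:ℤ) ≤ p.2.1 ∧ p.2.1 ≤ t ∧ (0:ℤ) ≤ p.2.2 ∧ p.2.2 ≤ t := by
      have : Finset.Icc ((0:ℤ),(0:ℤ),(0:ℤ)) (t,t,t)
          = Finset.Icc (0:ℤ) t ×ˢ (Finset.Icc (0:ℤ) t ×ˢ Finset.Icc (0:ℤ) t) := rfl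
      rw [this] at hp
      simp only [Finset.mem_product, Finset.mem_Icc] at hp
      tauto
    exact hall c hc p hp'.1 (le_trans hp'.2.1 htx) hp'.2.2.1
      (le_trans hp'.2.2.2.1 hty) hp'.2.2.2.2.1 (le_trans hp'.2.2.2.2.2 htz)
  have hcard : ((Finset.Icc ((0:ℤ),(0:ℤ),(0:ℤ)) (t,t,t)).card : ℤ) = (t+1)^3 := by
    have : Finset.Icc ((0:ℤ),(0:ℤ),(0:ℤ)) (t,t,t)
        = Finset.Icc (0:ℤ) t ×ˢ (Finset.Icc (0:ℤ) t ×ˢ Finset.Icc (0:ℤ) t) := rfl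
    rw [this]
    simp [Int.card_Icc]
    rw [max_eq_left (by omega : (0:ℤ) ≤ t + 1)]
    ring
  have := Finset.card_le_card hbox
  calc (t+1)^3 = ((Finset.Icc ((0:ℤ),(0:ℤ),(0:ℤ)) (t,t,t)).card : ℤ) := hcard.symm
    _ ≤ (C.card : ℤ) := by exact_mod_cast this

lemma pointwise_bound {t w : ℤ} (ht : 0 ≤ t) (hw : 128 ≤ w) (h : (t+1)^3 ≤ 3*w+1) :
    4*(3*w+1)*t ≤ w^2 := by
  rcases le_or_gt t 7 with h7 | h7
  · nlinarith
  · nlinarith [sq_nonneg t, sq_nonneg (t-8), mul_nonneg ht ht]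

lemma phiSum_finished {C : Finset Cube} (hfin : FinishedConfig C) {w : ℕ}
    (hw : 128 ≤ w) (hcard : C.card = 3 * w + 1) : 4 * PhiSum C ≤ (w:ℤ)^2 := by
  have hptw : ∀ c ∈ C, 4*(3*(w:ℤ)+1) * phiMin c ≤ (w:ℤ)^2 := by
    intro c hc
    obtain ⟨h0, h3⟩ := phiMin_cube_bound hfin hc
    rw [hcard] at h3
    push_cast at h3
    exact pointwise_bound h0 (by exact_mod_cast hw) (by linarith)
  have hsum : ∑ c ∈ C, 4*(3*(w:ℤ)+1) * phiMin c ≤ ∑ _c ∈ C, (w:ℤ)^2 :=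
    Finset.sum_le_sum hptw
  rw [← Finset.mul_sum, Finset.sum_const, hcard] at hsum
  have hw1 : (0:ℤ) < 3*(w:ℤ)+1 := by positivity
  have : (3*(w:ℤ)+1) * (4 * PhiSum C) ≤ (3*(w:ℤ)+1) * (w:ℤ)^2 := by
    unfold PhiSum
    rw [nsmul_eq_mul] at hsum
    push_cast at hsum ⊢
    nlinarith
  exact le_of_mul_le_mul_left this hw1

lemma pathConfig_not_finished {w : ℕ} (hw : 1 ≤ w) : ¬ FinishedConfig (pathConfig w) := by
  rintro ⟨-, hall⟩
  have hmem : ((w:ℤ), (1:ℤ), (0:ℤ)) ∈ pathConfig w := by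
    unfold pathConfig
    refine Finset.mem_union_left _ (Finset.mem_union_right _ ?_)
    simp only [Finset.mem_image, Finset.mem_Icc]
    exact ⟨1, by constructor <;> [omega; exact_mod_cast hw], rfl⟩
  have h010 : ((0:ℤ), (1:ℤ), (0:ℤ)) ∈ pathConfig w :=
    hall _ hmem ((0:ℤ), (1:ℤ), (0:ℤ)) (by norm_num) (by positivity) (by norm_num) (by norm_num) (by norm_num) (by norm_num)
  unfold pathConfig at h010
  have hw' : (1:ℤ) ≤ (w:ℤ) := by exact_mod_cast hw
  simp only [Finset.mem_union, Finset.mem_image, Finset.mem_Icc, Prod.mk.injEq] at h010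
  rcases h010 with (⟨i, -, -, h, -⟩ | ⟨j, -, h, -⟩) | ⟨k, -, h, -⟩ <;> omega
/-- there is a universal constant `c > 0` such that for every `w ≥ 1`,
every sequence of moves transforming the path configuration into a finished
configuration of `n = 3w + 1` cubes has length at least `c • n²`. -/
theorem compaction_lower_bound :
    ∃ c : ℚ, 0 < c ∧ ∀ w : ℕ, 1 ≤ w →
      ∀ (m : ℕ) (C' : Finset Cube), MoveSeq (pathConfig w) m C' →
        FinishedConfig C' → C'.card = 3 * w + 1 →
        c * ((3 * w + 1 : ℕ) : ℚ) ^ 2 ≤ (m : ℚ) := by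
  refine ⟨1/150000, by norm_num, fun w hw m C' hseq hfin hcard => ?_⟩
  have key : ((3 * w + 1 : ℕ) : ℤ)^2 ≤ 150000 * (m : ℤ) := by
    rcases le_or_gt 128 w with hbig | hsmall
    · have h1 := phiSum_moveSeq hseq
      have h2 := phiSum_path w
      have h3 := phiSum_finished hfin hbig hcard
      have hw' : (128:ℤ) ≤ (w:ℤ) := by exact_mod_cast hbig
      push_cast
      nlinarith
    · have hm : 1 ≤ m := by
        rcases Nat.eq_zero_or_pos m with rfl | h
        · exfalso
          obtain ⟨f, hf0, hfm, -⟩ := hseq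
          rw [← hfm, hf0] at hfin
          exact pathConfig_not_finished hw hfin
        · exact h
      have hn : (3:ℤ) * w + 1 ≤ 382 := by
        have : w ≤ 127 := by omega
        push_cast; omega
      have hm' : (1:ℤ) ≤ (m:ℤ) := by exact_mod_cast hm
      have hn0 : (0:ℤ) ≤ 3 * (w:ℤ) + 1 := by positivity
      push_cast
      nlinarith
  have key' : ((3 * w + 1 : ℕ) : ℚ)^2 ≤ 150000 * (m : ℚ) := by exact_mod_cast key
  linarith
end

section
/- Let C be a connected nonnegative configuration and let P = P(x,y,z_b,z_t) be a non-cut pillar of C. If none of conditions (a)–(d) hold for P, then on each side P has at most one adjacent pillar, and every adjacent pillar P' = P'(x',y',z'_b,z'_t) of P satisfies z_t ≤ z'_t + 1 and either z_b < z'_b or z_b = z'_b = 0. -/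
lemma mem_pillarSet {x y zb zt : ℤ} {a : Cube} :
    a ∈ pillarSet x y zb zt ↔ a.1 = x ∧ a.2.1 = y ∧ zb ≤ a.2.2 ∧ a.2.2 ≤ zt := by
  obtain ⟨a1, a2, a3⟩ := a
  simp only [pillarSet, Finset.mem_image, Finset.mem_Icc, Prod.mk.injEq]
  constructor
  · rintro ⟨z, ⟨hz1, hz2⟩, rfl, rfl, rfl⟩; exact ⟨rfl, rfl, hz1, hz2⟩
  · rintro ⟨rfl, rfl, h1, h2⟩; exact ⟨a3, ⟨h1, h2⟩, rfl, rfl, rfl⟩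

lemma mem_pillarSet' {x y zb zt z : ℤ} (h1 : zb ≤ z) (h2 : z ≤ zt) :
    ((x, y, z) : Cube) ∈ pillarSet x y zb zt :=
  mem_pillarSet.mpr ⟨rfl, rfl, h1, h2⟩

lemma gph_mono {S T : Finset Cube} (h : S ⊆ T) : gph S ≤ gph T := by
  intro a b hab
  exact ⟨h hab.1, h hab.2.1, hab.2.2⟩

lemma side_adj {x y x' y' : ℤ} (hs : IsSide x y x' y') (z : ℤ) :
    cubeAdj (x, y, z) (x', y', z) := by
  unfold cubeAdj
  rcases hs with ⟨rfl, rfl⟩ | ⟨rfl, rfl⟩ | ⟨rfl, rfl⟩ | ⟨rfl, rfl⟩ <;> simp <;> try omega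

lemma side_ne {x y x' y' : ℤ} (hs : IsSide x y x' y') : ¬ (x' = x ∧ y' = y) := by
  rcases hs with ⟨rfl, rfl⟩ | ⟨rfl, rfl⟩ | ⟨rfl, rfl⟩ | ⟨rfl, rfl⟩ <;> rintro ⟨h1, h2⟩ <;> omega

lemma reach_up {S : Finset Cube} {x y l u : ℤ} (hlu : l ≤ u)
    (hin : ∀ w, l ≤ w → w ≤ u → ((x, y, w) : Cube) ∈ S) :
    (gph S).Reachable (x, y, l) (x, y, u) := by
  refine Int.le_induction (motive := fun u _ => (∀ w, l ≤ w → w ≤ u → ((x, y, w) : Cube) ∈ S) →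
      (gph S).Reachable (x, y, l) (x, y, u)) (fun _ => SimpleGraph.Reachable.refl _)
    ?_ u hlu hin
  intro n hn ih hin'
  refine (ih fun w h1 h2 => hin' w h1 (by omega)).trans (SimpleGraph.Adj.reachable ?_)
  refine ⟨hin' n hn (by omega), hin' (n + 1) (by omega) le_rfl, ?_⟩
  unfold cubeAdj; simp

lemma reach_vert {S : Finset Cube} {x y l u z z' : ℤ}
    (h1 : l ≤ z) (h2 : z ≤ u) (h3 : l ≤ z') (h4 : z' ≤ u)
    (hin : ∀ w, l ≤ w → w ≤ u → ((x, y, w) : Cube) ∈ S) :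
    (gph S).Reachable (x, y, z) (x, y, z') :=
  ((reach_up h1 fun w hw1 hw2 => hin w hw1 (hw2.trans h2)).symm).trans
    (reach_up h3 fun w hw1 hw2 => hin w hw1 (hw2.trans h4))

lemma pillar_sep {C : Finset Cube} {x' y' b1 t1 b2 t2 : ℤ}
    (h1 : IsPillar C x' y' b1 t1) (h2 : IsPillar C x' y' b2 t2)
    (ho1 : b2 ≤ t1 + 1) (ho2 : b1 ≤ t2 + 1) : b1 = b2 ∧ t1 = t2 := by
  obtain ⟨⟨hle1, hsub1⟩, hbot1, htop1⟩ := h1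
  obtain ⟨⟨hle2, hsub2⟩, hbot2, htop2⟩ := h2
  constructor
  · by_contra hne
    rcases lt_or_gt_of_ne hne with h | h
    · exact hbot2 (hsub1 (mem_pillarSet' (by omega) (by omega)))
    · exact hbot1 (hsub2 (mem_pillarSet' (by omega) (by omega)))
  · by_contra hne
    rcases lt_or_gt_of_ne hne with h | h
    · exact htop1 (hsub2 (mem_pillarSet' (by omega) (by omega)))
    · exact htop2 (hsub1 (mem_pillarSet' (by omega) (by omega)))

/-- Key connectivity lemma: with two adjacent pillars on the same side separated by a
gap, removing the cube of `P` just below the upper pillar keeps `C` connected. -/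
lemma erase_conn (C : Finset Cube) (x y zb zt : ℤ)
    (hP : IsPillar C x y zb zt)
    (hnc : ConnOrEmpty (C \ pillarSet x y zb zt))
    (x' y' : ℤ) (hs : IsSide x y x' y')
    (b1 t1 b2 t2 : ℤ)
    (h1 : AdjPillar C x y zb zt x' y' b1 t1)
    (h2 : AdjPillar C x y zb zt x' y' b2 t2)
    (hb1 : zb ≤ b1) (hgap : t1 + 1 < b2) :
    Conn (C.erase (x, y, b2 - 1)) := by
  obtain ⟨⟨⟨hle1, hsub1⟩, _, _⟩, _, hbzt1, hzbt1⟩ := h1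
  obtain ⟨⟨⟨hle2, hsub2⟩, _, _⟩, _, hbzt2, hzbt2⟩ := h2
  obtain ⟨⟨hle, hsub⟩, hbot, htop⟩ := hP
  have hne := side_ne hs
  -- membership helpers
  have pcube : ∀ w, zb ≤ w → w ≤ zt → ((x, y, w) : Cube) ∈ C := fun w hw1 hw2 =>
    hsub (mem_pillarSet' hw1 hw2)
  have p1cube : ∀ w, b1 ≤ w → w ≤ t1 → ((x', y', w) : Cube) ∈ C := fun w hw1 hw2 =>
    hsub1 (mem_pillarSet' hw1 hw2)
  have p2cube : ∀ w, b2 ≤ w → w ≤ t2 → ((x', y', w) : Cube) ∈ C := fun w hw1 hw2 =>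
    hsub2 (mem_pillarSet' hw1 hw2)
  have hnotP : ∀ w : ℤ, ((x', y', w) : Cube) ∉ pillarSet x y zb zt := by
    intro w hw
    exact hne ⟨(mem_pillarSet.mp hw).1, (mem_pillarSet.mp hw).2.1⟩
  have hPside : ∀ w : ℤ, ((x', y', w) : Cube) ∈ C →
      ((x', y', w) : Cube) ∈ C \ pillarSet x y zb zt :=
    fun w hw => Finset.mem_sdiff.mpr ⟨hw, hnotP w⟩
  set c : Cube := (x, y, b2 - 1) with hc
  have hsideNe : ∀ w : ℤ, ((x', y', w) : Cube) ≠ c := by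
    intro w hw
    rw [hc, Prod.mk.injEq] at hw
    exact hne ⟨hw.1, congrArg Prod.fst hw.2⟩
  have hvertNe : ∀ w : ℤ, w ≠ b2 - 1 → ((x, y, w) : Cube) ≠ c := by
    intro w hw heq
    rw [hc, Prod.mk.injEq, Prod.mk.injEq] at heq
    exact hw heq.2.2
  have hsubE : C \ pillarSet x y zb zt ⊆ C.erase c := by
    intro a ha
    rw [Finset.mem_sdiff] at ha
    refine Finset.mem_erase.mpr ⟨fun h => ha.2 ?_, ha.1⟩
    rw [h, hc]
    exact mem_pillarSet' (by omega) (by omega)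
  -- base point
  set w0 : Cube := (x', y', b1) with hw0
  have hw0mem : w0 ∈ C \ pillarSet x y zb zt := hPside b1 (p1cube b1 le_rfl hle1)
  have hCP : Conn (C \ pillarSet x y zb zt) := by
    rcases hnc with h | h
    · rw [h] at hw0mem; exact absurd hw0mem (Finset.notMem_empty _)
    · exact h
  have hw0e : w0 ∈ C.erase c := hsubE hw0mem
  -- cubes of P with z in [zb, b2-2] resp. [b2, zt] are in the erased set
  have hlowIn : ∀ w, zb ≤ w → w ≤ b2 - 2 → ((x, y, w) : Cube) ∈ C.erase c := by
    intro w hw1 hw2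
    exact Finset.mem_erase.mpr ⟨hvertNe w (by omega), pcube w hw1 (by omega)⟩
  have hhighIn : ∀ w, b2 ≤ w → w ≤ zt → ((x, y, w) : Cube) ∈ C.erase c := by
    intro w hw1 hw2
    exact Finset.mem_erase.mpr ⟨hvertNe w (by omega), pcube w (by omega) hw2⟩
  -- any cube of C \ P reaches w0
  have hreachCP : ∀ a ∈ C \ pillarSet x y zb zt, (gph (C.erase c)).Reachable a w0 := by
    intro a ha
    exact SimpleGraph.Reachable.mono (gph_mono hsubE) (hCP.2 a ha w0 hw0mem)
  have key : ∀ a ∈ C.erase c, (gph (C.erase c)).Reachable a w0 := by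
    intro a ha
    have haC : a ∈ C := Finset.mem_of_mem_erase ha
    have hane : a ≠ c := (Finset.mem_erase.mp ha).1
    by_cases hp : a ∈ pillarSet x y zb zt
    · simp only [pillarSet, Finset.mem_image, Finset.mem_Icc] at hp
      obtain ⟨z, ⟨hz1, hz2⟩, rfl⟩ := hp
      have hzne : z ≠ b2 - 1 := fun h => hane (by rw [hc, h])
      rcases (by omega : z ≤ b2 - 2 ∨ b2 ≤ z) with hcase | hcase
      · -- go to level t1, cross to pillar 1
        have r1 : (gph (C.erase c)).Reachable (x, y, z) (x, y, t1) :=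
          reach_vert (l := zb) (u := b2 - 2) hz1 hcase (hb1.trans hle1) (by omega) hlowIn
        have r2 : (gph (C.erase c)).Adj (x, y, t1) (x', y', t1) := by
          refine ⟨hlowIn t1 (by omega) (by omega), ?_, side_adj hs t1⟩
          exact Finset.mem_erase.mpr ⟨hsideNe t1, p1cube t1 hle1 le_rfl⟩
        exact (r1.trans r2.reachable).trans (hreachCP _ (hPside t1 (p1cube t1 hle1 le_rfl)))
      · -- go to level b2, cross to pillar 2
        have r1 : (gph (C.erase c)).Reachable (x, y, z) (x, y, b2) :=
          reach_vert (l := b2) (u := zt) hcase hz2 le_rfl hbzt2 hhighIn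
        have r2 : (gph (C.erase c)).Adj (x, y, b2) (x', y', b2) := by
          refine ⟨hhighIn b2 le_rfl hbzt2, ?_, side_adj hs b2⟩
          exact Finset.mem_erase.mpr ⟨hsideNe b2, p2cube b2 le_rfl hle2⟩
        exact (r1.trans r2.reachable).trans (hreachCP _ (hPside b2 (p2cube b2 le_rfl hle2)))
    · exact hreachCP a (Finset.mem_sdiff.mpr ⟨haC, hp⟩)
  exact ⟨⟨w0, hw0e⟩, fun a ha b hb => (key a ha).trans (key b hb).symm⟩

/-- Lemma 1: if none of conditions (a)--(d) hold for a non-cut pillar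
`P` of `C`, then on each side `P` has at most one adjacent pillar, and each adjacent
pillar `P'` satisfies `z_t ≤ z'_t + 1` and either `z_b < z'_b` or `z_b = z'_b = 0`. -/
theorem lemma_moves_a_d (C : Finset Cube) (hC : Conn C) (hN : Nonneg C)
    (x y zb zt : ℤ) (hP : IsPillar C x y zb zt)
    (hnc : ConnOrEmpty (C \ pillarSet x y zb zt))
    (ha : ¬ CondA C x y zb zt) (hb : ¬ CondB C x y zb zt)
    (hc : ¬ CondC C x y zb zt) (hd : ¬ CondD C x y zb zt) :
    (∀ x' y' z'b z't z''b z''t, AdjPillar C x y zb zt x' y' z'b z't →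
        AdjPillar C x y zb zt x' y' z''b z''t → z'b = z''b ∧ z't = z''t) ∧
    (∀ x' y' z'b z't, AdjPillar C x y zb zt x' y' z'b z't →
        zt ≤ z't + 1 ∧ (zb < z'b ∨ (zb = z'b ∧ z'b = 0))) := by
  obtain ⟨⟨hle, hsub⟩, hbotP, htopP⟩ := hP
  have hPfull : IsPillar C x y zb zt := ⟨⟨hle, hsub⟩, hbotP, htopP⟩
  have hzb0 : 0 ≤ zb :=
    (hN _ (hsub (mem_pillarSet' le_rfl hle))).2.2
  -- from not-(c): every adjacent pillar has zb ≤ z'b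
  have hlb : ∀ x' y' z'b z't, AdjPillar C x y zb zt x' y' z'b z't → zb ≤ z'b := by
    intro x' y' z'b z't hadj
    by_contra hlt
    exact hc ⟨hbotP, x', y', z'b, z't, hadj, by omega⟩
  -- at most one adjacent pillar per side
  have part1 : ∀ x' y' z'b z't z''b z''t, AdjPillar C x y zb zt x' y' z'b z't →
      AdjPillar C x y zb zt x' y' z''b z''t → z'b = z''b ∧ z't = z''t := by
    intro x' y' b1 t1 b2 t2 h1 h2
    rcases le_or_gt b2 (t1 + 1) with hgap1 | hgap1
    · rcases le_or_gt b1 (t2 + 1) with hgap2 | hgap2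
      · exact pillar_sep h1.1 h2.1 hgap1 hgap2
      · -- gap : t2 + 1 < b1, pillar (b1,t1) is the upper one
        exfalso
        have hconn := erase_conn C x y zb zt hPfull hnc x' y' h2.2.1 b2 t2 b1 t1 h2 h1
          (hlb _ _ _ _ h2) hgap2
        have hzb_lt : zb < b1 := by
          have hA := hlb _ _ _ _ h2
          have hB := h2.1.1.1
          omega
        exact hb ⟨x', y', b1, t1, h1, hzb_lt, fun hcut => hcut.2 hconn⟩
    · -- gap : t1 + 1 < b2, pillar (b2,t2) is the upper one
      exfalso
      have hconn := erase_conn C x y zb zt hPfull hnc x' y' h1.2.1 b1 t1 b2 t2 h1 h2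
        (hlb _ _ _ _ h1) hgap1
      have hzb_lt : zb < b2 := by
        have hA := hlb _ _ _ _ h1
        have hB := h1.1.1.1
        omega
      exact hb ⟨x', y', b2, t2, h2, hzb_lt, fun hcut => hcut.2 hconn⟩
  refine ⟨part1, ?_⟩
  intro x' y' z'b z't hadj
  constructor
  · -- zt ≤ z't + 1 from not-(a)
    by_contra hlt
    refine ha ⟨x', y', z'b, z't, hadj, ?_, by omega⟩
    intro z''b z''t h''
    exact (part1 x' y' z'b z't z''b z''t hadj h'').2.ge
  · -- zb < z'b or zb = z'b = 0 from not-(c), not-(d)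
    have hge := hlb _ _ _ _ hadj
    rcases eq_or_lt_of_le hge with heq | hlt
    · right
      refine ⟨heq, ?_⟩
      by_contra hne0
      refine hd ⟨hbotP, x', y', z'b, z't, hadj, ?_, heq.symm, by omega⟩
      intro z''b z''t h''
      exact (part1 x' y' z'b z't z''b z''t hadj h'').1.le
    · exact Or.inl hlt
end

section
/- Let C be an unfinished connected nonnegative configuration with at least two cubes that admits no move of type (f). If a connected component of G_{C_{>0}} consists of a single pillar P = P(x,y,z_b,z_t) (that is, the component equals {x}×{y}×{z_b,…,z_t}), then x = y = 0 and z_b = z_t = 1, i.e. P = {(0,0,1)}, and moreover (0,0,0) ∈ C. -/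
lemma closed_subset (C H : Finset Cube) (hHC : H ⊆ C) (hne : H.Nonempty)
    (hcl : ∀ a ∈ H, ∀ b ∈ C, cubeAdj a b → b ∈ H) (hC : Conn C) : C ⊆ H := by
  obtain ⟨h0, h0mem⟩ := hne
  have key : ∀ a b : Cube, (gph C).Walk a b → a ∈ H → b ∈ H := by
    intro a b w
    induction w with
    | nil => exact id
    | cons h _ ih => intro ha; exact ih (hcl _ ha _ h.2.1 h.2.2)
  intro b hb
  exact ((hC.2 h0 (hHC h0mem) b hb)).elim fun w => key _ _ w h0mem

lemma erase_leaf_conn (C : Finset Cube) (c n : Cube) (hn : n ∈ C) (hne : n ≠ c)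
    (huniq : ∀ b ∈ C, cubeAdj c b → b = n) (hC : Conn C) : Conn (C.erase c) := by
  have key : ∀ k : ℕ, ∀ a b : Cube, a ≠ c → b ≠ c →
      ∀ w : (gph C).Walk a b, w.length ≤ k → (gph (C.erase c)).Reachable a b := by
    intro k
    induction k with
    | zero =>
      intro a b ha hb w hw
      have : a = b := w.eq_of_length_eq_zero (Nat.le_zero.mp hw)
      subst this; rfl
    | succ k ih =>
      intro a b ha hb w hw
      cases w with
      | nil => rfl
      | @cons _ v _ h w' =>
        by_cases hvc : v = c
        · have hav : a = n := huniq a h.1 (by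
            have := cubeAdj_symm h.2.2
            rwa [hvc] at this)
          cases w' with
          | nil => exact absurd hvc hb
          | @cons _ v2 _ h2 w2 =>
            have hv2 : v2 = n := huniq v2 h2.2.1 (by
              have := h2.2.2; rwa [hvc] at this)
            have hv2c : v2 ≠ c := by rw [hv2]; exact hne
            have hr := ih v2 b hv2c hb w2 (by
              simp only [SimpleGraph.Walk.length_cons] at hw; omega)
            rw [hav, ← hv2]; exact hr
        · have hedge : (gph (C.erase c)).Adj a v :=
            ⟨Finset.mem_erase.mpr ⟨ha, h.1⟩, Finset.mem_erase.mpr ⟨hvc, h.2.1⟩, h.2.2⟩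
          exact hedge.reachable.trans (ih v b hvc hb w' (by
            simp only [SimpleGraph.Walk.length_cons] at hw; omega))
  refine ⟨⟨n, Finset.mem_erase.mpr ⟨hne, hn⟩⟩, ?_⟩
  intro a ha b hb
  rw [Finset.mem_erase] at ha hb
  exact ((hC.2 a ha.2 b hb.2)).elim fun w => key w.length a b ha.1 hb.1 w le_rfl

lemma moveF_of (C : Finset Cube) (c c' : Cube)
    (hmv : IsSlide C c c' ∨ IsConvexTrans C c c') (hconn : Conn (C.erase c))
    (hz : 0 < c.2.2) (hnn : Nonneg C)
    (hc'nn : 0 ≤ c'.1 ∧ 0 ≤ c'.2.1 ∧ 0 ≤ c'.2.2)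
    (hc : c ∈ C) (hc' : c' ∉ C) (hpot : pot c' < pot c) : MoveTypeF C := by
  refine ⟨c, c', ⟨hmv, hconn⟩, hz, ?_, ?_⟩
  · intro a ha
    rcases Finset.mem_insert.mp ha with rfl | ha
    · exact hc'nn
    · exact hnn a (Finset.mem_of_mem_erase ha)
  · have h1 : Pot (insert c' (C.erase c)) = pot c' + Pot (C.erase c) :=
      Finset.sum_insert (fun h => hc' (Finset.mem_of_mem_erase h))
    have h2 : Pot (C.erase c) = Pot C - pot c := Finset.sum_erase_eq_sub hc
    rw [h1, h2]; omega

lemma cubeAdj_mk {a1 a2 a3 b1 b2 b3 : ℤ}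
    (h : (a1 - b1).natAbs + (a2 - b2).natAbs + (a3 - b3).natAbs = 1) :
    cubeAdj (a1, a2, a3) (b1, b2, b3) := h

lemma cube_eq {b : Cube} {p q r : ℤ} (h1 : b.1 = p) (h2 : b.2.1 = q) (h3 : b.2.2 = r) :
    b = (p, q, r) := by
  obtain ⟨b1, b2, b3⟩ := b
  simp only [Prod.mk.injEq]
  exact ⟨h1, h2, h3⟩
lemma adj_cases {a b : Cube} (h : cubeAdj a b) :
    (b.1 = a.1 + 1 ∧ b.2.1 = a.2.1 ∧ b.2.2 = a.2.2) ∨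
    (b.1 = a.1 - 1 ∧ b.2.1 = a.2.1 ∧ b.2.2 = a.2.2) ∨
    (b.1 = a.1 ∧ b.2.1 = a.2.1 + 1 ∧ b.2.2 = a.2.2) ∨
    (b.1 = a.1 ∧ b.2.1 = a.2.1 - 1 ∧ b.2.2 = a.2.2) ∨
    (b.1 = a.1 ∧ b.2.1 = a.2.1 ∧ b.2.2 = a.2.2 + 1) ∨
    (b.1 = a.1 ∧ b.2.1 = a.2.1 ∧ b.2.2 = a.2.2 - 1) := by
  unfold cubeAdj at h
  have h1 : (a.1 - b.1).natAbs = 1 ∨ (a.2.1 - b.2.1).natAbs = 1 ∨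
      (a.2.2 - b.2.2).natAbs = 1 := by omega
  rcases h1 with h1 | h1 | h1
  · have h2 : b.2.1 = a.2.1 ∧ b.2.2 = a.2.2 := by omega
    have h3 : b.1 = a.1 + 1 ∨ b.1 = a.1 - 1 := by omega
    rcases h3 with h3 | h3
    · exact Or.inl ⟨h3, h2.1, h2.2⟩
    · exact Or.inr (Or.inl ⟨h3, h2.1, h2.2⟩)
  · have h2 : b.1 = a.1 ∧ b.2.2 = a.2.2 := by omega
    have h3 : b.2.1 = a.2.1 + 1 ∨ b.2.1 = a.2.1 - 1 := by omega
    rcases h3 with h3 | h3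
    · exact Or.inr (Or.inr (Or.inl ⟨h2.1, h3, h2.2⟩))
    · exact Or.inr (Or.inr (Or.inr (Or.inl ⟨h2.1, h3, h2.2⟩)))
  · have h2 : b.1 = a.1 ∧ b.2.1 = a.2.1 := by omega
    have h3 : b.2.2 = a.2.2 + 1 ∨ b.2.2 = a.2.2 - 1 := by omega
    rcases h3 with h3 | h3
    · exact Or.inr (Or.inr (Or.inr (Or.inr (Or.inl ⟨h2.1, h2.2, h3⟩))))
    · exact Or.inr (Or.inr (Or.inr (Or.inr (Or.inr ⟨h2.1, h2.2, h3⟩))))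

lemma mem_pillarSet_mk {x y zb zt p q r : ℤ} (h1 : p = x) (h2 : q = y)
    (h3 : zb ≤ r) (h4 : r ≤ zt) : (p, q, r) ∈ pillarSet x y zb zt :=
  mem_pillarSet.mpr ⟨h1, h2, h3, h4⟩

lemma pot_mk (a b c : ℤ) : pot (a, b, c) =
    (if 1 < c then 5 else if c = 1 then 4 else if 1 < b then 3
      else if b = 1 then 2 else 1) * (a + 2 * b + 4 * c) := rfl

lemma pot_lt_top (x y zt : ℤ) (hx : 0 ≤ x) (hy : 0 ≤ y) (hzt : 2 ≤ zt) :
    pot (x + 1, y, zt - 1) < pot (x, y, zt) := by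
  simp only [pot_mk]
  split_ifs <;> omega

lemma pot_lt_x_slide (x y : ℤ) : pot (x - 1, y, 1) < pot (x, y, 1) := by
  simp only [pot_mk]
  split_ifs <;> omega

lemma pot_lt_x_conv (x y : ℤ) (hx : 1 ≤ x) (hy : 0 ≤ y) :
    pot (x - 1, y, 0) < pot (x, y, 1) := by
  simp only [pot_mk]
  split_ifs <;> omega

lemma pot_lt_y_slide (x y : ℤ) : pot (x, y - 1, 1) < pot (x, y, 1) := by
  simp only [pot_mk]
  split_ifs <;> omega

lemma pot_lt_y_conv (x y : ℤ) (hx : 0 ≤ x) (hy : 1 ≤ y) :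
    pot (x, y - 1, 0) < pot (x, y, 1) := by
  simp only [pot_mk]
  split_ifs <;> omega

/-- Lemma 3: if an unfinished configuration admits no move of
type (f) and a component of `G_{C_{>0}}` is a single pillar, then that pillar is
`{(0,0,1)}` and `(0,0,0) ∈ C`. -/
theorem single_pillar_component (C : Finset Cube) (hC : Conn C) (hN : Nonneg C)
    (hcard : 2 ≤ C.card) (hunf : ¬ (∀ c ∈ C, FinishedCube C c))
    (hf : ¬ MoveTypeF C)
    (H : Finset Cube) (hH : IsHighComp C H)
    (x y zb zt : ℤ) (hzb : zb ≤ zt) (hpil : H = pillarSet x y zb zt) :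
    x = 0 ∧ y = 0 ∧ zb = 1 ∧ zt = 1 ∧ ((0 : ℤ), (0 : ℤ), (0 : ℤ)) ∈ C := by
  subst hpil
  obtain ⟨hsub, hconnH, hclo⟩ := hH
  have hPC : pillarSet x y zb zt ⊆ C := fun p hp => (Finset.mem_filter.mp (hsub hp)).1
  have hbmem : ((x : ℤ), y, zb) ∈ pillarSet x y zb zt :=
    mem_pillarSet.mpr ⟨rfl, rfl, le_refl zb, hzb⟩
  have hzb1 : (0 : ℤ) < zb := (Finset.mem_filter.mp (hsub hbmem)).2
  have hbC : ((x : ℤ), y, zb) ∈ C := hPC hbmem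
  have hx0 : 0 ≤ x := (hN _ hbC).1
  have hy0 : 0 ≤ y := (hN _ hbC).2.1
  have hnotC : ∀ px py pz az : ℤ, 0 < pz → ¬(px = x ∧ py = y ∧ zb ≤ pz ∧ pz ≤ zt) →
      zb ≤ az → az ≤ zt → cubeAdj (x, y, az) (px, py, pz) → (px, py, pz) ∉ C := by
    intro px py pz az hz hnp h1 h2 hadj hpC
    have hm := hclo (x, y, az) (mem_pillarSet.mpr ⟨rfl, rfl, h1, h2⟩)
      (px, py, pz) (Finset.mem_filter.mpr ⟨hpC, hz⟩) hadj
    rw [mem_pillarSet] at hm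
    exact hnp hm
  have hclosedC : ((x : ℤ), y, zb - 1) ∉ C → C ⊆ pillarSet x y zb zt := by
    intro hbot
    refine closed_subset C _ hPC ⟨_, hbmem⟩ ?_ hC
    intro a ha b hb hadj
    obtain ⟨hax, hay, h1, h2⟩ := mem_pillarSet.mp ha
    rcases adj_cases hadj with hc | hc | hc | hc | hc | hc <;>
      rw [hax, hay] at hc <;>
      rw [cube_eq hc.1 hc.2.1 hc.2.2] at hb ⊢
    · exact absurd hb (hnotC (x + 1) y a.2.2 a.2.2 (by omega) (by omega) h1 h2
        (cubeAdj_mk (by omega)))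
    · exact absurd hb (hnotC (x - 1) y a.2.2 a.2.2 (by omega) (by omega) h1 h2
        (cubeAdj_mk (by omega)))
    · exact absurd hb (hnotC x (y + 1) a.2.2 a.2.2 (by omega) (by omega) h1 h2
        (cubeAdj_mk (by omega)))
    · exact absurd hb (hnotC x (y - 1) a.2.2 a.2.2 (by omega) (by omega) h1 h2
        (cubeAdj_mk (by omega)))
    · by_cases hle : a.2.2 + 1 ≤ zt
      · exact mem_pillarSet_mk rfl rfl (by omega) hle
      · exact absurd hb (hnotC x y (a.2.2 + 1) a.2.2 (by omega) (by omega) h1 h2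
          (cubeAdj_mk (by omega)))
    · by_cases hge : zb ≤ a.2.2 - 1
      · exact mem_pillarSet_mk rfl rfl hge (by omega)
      · exfalso
        have he : a.2.2 = zb := by omega
        rw [he] at hb
        by_cases h0 : (0 : ℤ) < zb - 1
        · exact hnotC x y (zb - 1) zb h0 (by omega) le_rfl hzb (cubeAdj_mk (by omega)) hb
        · exact hbot hb
  have hcard1 : ∀ a : ℤ, C ⊆ pillarSet x y a a → False := by
    intro a hsubC
    have he : pillarSet x y a a = {((x : ℤ), y, a)} := by
      rw [pillarSet, Finset.Icc_self, Finset.image_singleton]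
    rw [he] at hsubC
    have := Finset.card_le_card hsubC
    rw [Finset.card_singleton] at this
    omega
  have hzt1 : zt ≤ 1 := by
    by_contra hzt2'
    have hzt2 : 2 ≤ zt := by omega
    apply hf
    by_cases hlt : zb < zt
    · -- move the top cube via a convex transition
      have htC : ((x : ℤ), y, zt) ∈ C := hPC (mem_pillarSet.mpr ⟨rfl, rfl, hzb, le_rfl⟩)
      have hnC : ((x : ℤ), y, zt - 1) ∈ C :=
        hPC (mem_pillarSet_mk rfl rfl (by omega) (by omega))
      have huniq : ∀ b ∈ C, cubeAdj (x, y, zt) b → b = ((x : ℤ), y, zt - 1) := by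
        intro b hb hadj
        rcases adj_cases hadj with hc | hc | hc | hc | hc | hc <;>
          rw [cube_eq hc.1 hc.2.1 hc.2.2] at hb ⊢
        · exact absurd hb (hnotC (x + 1) y zt zt (by omega) (by omega) hzb le_rfl
            (cubeAdj_mk (by omega)))
        · exact absurd hb (hnotC (x - 1) y zt zt (by omega) (by omega) hzb le_rfl
            (cubeAdj_mk (by omega)))
        · exact absurd hb (hnotC x (y + 1) zt zt (by omega) (by omega) hzb le_rfl
            (cubeAdj_mk (by omega)))
        · exact absurd hb (hnotC x (y - 1) zt zt (by omega) (by omega) hzb le_rfl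
            (cubeAdj_mk (by omega)))
        · exact absurd hb (hnotC x y (zt + 1) zt (by omega) (by omega) hzb le_rfl
            (cubeAdj_mk (by omega)))
      have hconn := erase_leaf_conn C (x, y, zt) (x, y, zt - 1) hnC
        (by simp only [ne_eq, Prod.mk.injEq]; omega) huniq hC
      have hc'notC : ((x : ℤ) + 1, y, zt - 1) ∉ C :=
        hnotC (x + 1) y (zt - 1) (zt - 1) (by omega) (by omega) (by omega) (by omega)
          (cubeAdj_mk (by omega))
      have hsnotC : ((x : ℤ) + 1, y, zt) ∉ C :=
        hnotC (x + 1) y zt zt (by omega) (by omega) hzb le_rfl (cubeAdj_mk (by omega))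
      refine moveF_of C (x, y, zt) (x + 1, y, zt - 1)
        (Or.inr ⟨htC, hc'notC, (x, y, zt - 1), (x + 1, y, zt),
          ⟨cubeAdj_mk (by omega), cubeAdj_mk (by omega), cubeAdj_mk (by omega),
           cubeAdj_mk (by omega), by simp only [ne_eq, Prod.mk.injEq]; omega,
           by simp only [ne_eq, Prod.mk.injEq]; omega⟩,
          Or.inl ⟨hnC, hsnotC⟩⟩)
        hconn (show (0:ℤ) < zt by omega) hN
        ⟨show (0:ℤ) ≤ x + 1 by omega, show (0:ℤ) ≤ y by omega,
         show (0:ℤ) ≤ zt - 1 by omega⟩ htC hc'notC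
        (pot_lt_top x y zt hx0 hy0 hzt2)
    · -- zb = zt ≥ 2 : C is a single cube, contradiction
      exfalso
      have hzbe : zb = zt := by omega
      subst hzbe
      have hbot : ((x : ℤ), y, zb - 1) ∉ C :=
        hnotC x y (zb - 1) zb (by omega) (by omega) le_rfl le_rfl (cubeAdj_mk (by omega))
      exact hcard1 zb (hclosedC hbot)
  have hzbe : zb = 1 := by omega
  have hzte : zt = 1 := by omega
  subst hzbe; subst hzte
  have hbot : ((x : ℤ), y, (0 : ℤ)) ∈ C := by
    by_contra hbot
    exact hcard1 1 (hclosedC (by simpa using hbot))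
  have htC : ((x : ℤ), y, (1 : ℤ)) ∈ C := hPC (mem_pillarSet.mpr ⟨rfl, rfl, le_rfl, le_rfl⟩)
  have huniq : ∀ b ∈ C, cubeAdj (x, y, (1 : ℤ)) b → b = ((x : ℤ), y, (0 : ℤ)) := by
    intro b hb hadj
    rcases adj_cases hadj with hc | hc | hc | hc | hc | hc <;>
      rw [cube_eq hc.1 hc.2.1 hc.2.2] at hb ⊢
    · exact absurd hb (hnotC (x + 1) y 1 1 (by omega) (by omega) le_rfl le_rfl
        (cubeAdj_mk (by omega)))
    · exact absurd hb (hnotC (x - 1) y 1 1 (by omega) (by omega) le_rfl le_rfl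
        (cubeAdj_mk (by omega)))
    · exact absurd hb (hnotC x (y + 1) 1 1 (by omega) (by omega) le_rfl le_rfl
        (cubeAdj_mk (by omega)))
    · exact absurd hb (hnotC x (y - 1) 1 1 (by omega) (by omega) le_rfl le_rfl
        (cubeAdj_mk (by omega)))
    · exact absurd hb (hnotC x y 2 1 (by omega) (by omega) le_rfl le_rfl
        (cubeAdj_mk (by omega)))
    · norm_num
  have hconn := erase_leaf_conn C (x, y, (1 : ℤ)) (x, y, (0 : ℤ)) hbot
    (by simp only [ne_eq, Prod.mk.injEq]; omega) huniq hC
  have hxe : x = 0 := by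
    by_contra hxne
    have hx1 : 1 ≤ x := by omega
    apply hf
    have hc'notC : ((x : ℤ) - 1, y, (1 : ℤ)) ∉ C :=
      hnotC (x - 1) y 1 1 (by omega) (by omega) le_rfl le_rfl (cubeAdj_mk (by omega))
    by_cases hm : ((x : ℤ) - 1, y, (0 : ℤ)) ∈ C
    · refine moveF_of C (x, y, 1) (x - 1, y, 1)
        (Or.inl ⟨htC, hc'notC, (x - 1, y, 0), (x, y, 0),
          ⟨cubeAdj_mk (by omega), cubeAdj_mk (by omega), cubeAdj_mk (by omega),
           cubeAdj_mk (by omega), by simp only [ne_eq, Prod.mk.injEq]; omega,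
           by simp only [ne_eq, Prod.mk.injEq]; omega⟩, hm, hbot⟩)
        hconn (show (0:ℤ) < 1 by omega) hN
        ⟨show (0:ℤ) ≤ x - 1 by omega, show (0:ℤ) ≤ y by omega,
         show (0:ℤ) ≤ 1 by omega⟩ htC hc'notC
        (pot_lt_x_slide x y)
    · refine moveF_of C (x, y, 1) (x - 1, y, 0)
        (Or.inr ⟨htC, hm, (x, y, 0), (x - 1, y, 1),
          ⟨cubeAdj_mk (by omega), cubeAdj_mk (by omega), cubeAdj_mk (by omega),
           cubeAdj_mk (by omega), by simp only [ne_eq, Prod.mk.injEq]; omega,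
           by simp only [ne_eq, Prod.mk.injEq]; omega⟩,
          Or.inl ⟨hbot, hc'notC⟩⟩)
        hconn (show (0:ℤ) < 1 by omega) hN
        ⟨show (0:ℤ) ≤ x - 1 by omega, show (0:ℤ) ≤ y by omega,
         show (0:ℤ) ≤ 0 by omega⟩ htC hm
        (pot_lt_x_conv x y hx1 hy0)
  have hye : y = 0 := by
    by_contra hyne
    have hy1 : 1 ≤ y := by omega
    apply hf
    have hc'notC : ((x : ℤ), y - 1, (1 : ℤ)) ∉ C :=
      hnotC x (y - 1) 1 1 (by omega) (by omega) le_rfl le_rfl (cubeAdj_mk (by omega))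
    by_cases hm : ((x : ℤ), y - 1, (0 : ℤ)) ∈ C
    · refine moveF_of C (x, y, 1) (x, y - 1, 1)
        (Or.inl ⟨htC, hc'notC, (x, y - 1, 0), (x, y, 0),
          ⟨cubeAdj_mk (by omega), cubeAdj_mk (by omega), cubeAdj_mk (by omega),
           cubeAdj_mk (by omega), by simp only [ne_eq, Prod.mk.injEq]; omega,
           by simp only [ne_eq, Prod.mk.injEq]; omega⟩, hm, hbot⟩)
        hconn (show (0:ℤ) < 1 by omega) hN
        ⟨show (0:ℤ) ≤ x by omega, show (0:ℤ) ≤ y - 1 by omega,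
         show (0:ℤ) ≤ 1 by omega⟩ htC hc'notC
        (pot_lt_y_slide x y)
    · refine moveF_of C (x, y, 1) (x, y - 1, 0)
        (Or.inr ⟨htC, hm, (x, y, 0), (x, y - 1, 1),
          ⟨cubeAdj_mk (by omega), cubeAdj_mk (by omega), cubeAdj_mk (by omega),
           cubeAdj_mk (by omega), by simp only [ne_eq, Prod.mk.injEq]; omega,
           by simp only [ne_eq, Prod.mk.injEq]; omega⟩,
          Or.inl ⟨hbot, hc'notC⟩⟩)
        hconn (show (0:ℤ) < 1 by omega) hN
        ⟨show (0:ℤ) ≤ x by omega, show (0:ℤ) ≤ y - 1 by omega,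
         show (0:ℤ) ≤ 0 by omega⟩ htC hm
        (pot_lt_y_conv x y hx0 hy1)
  subst hxe; subst hye
  exact ⟨rfl, rfl, rfl, rfl, hbot⟩
end
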